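/- If a closed term e of the calculus satisfies e⇓, then there exists an ordinal β < ω₁ (the least uncountable ordinal) with e⇓_β. -/

import Mathlib

set_option maxHeartbeats 1000000

namespace CountChoice

/-! ## Syntax: types and terms (de Bruijn indices) -/

/-- Types: type variables, unit, products, functions, recursive sum types
`μα.(τ₁+…+τₙ)` (the `μ` binds one type variable, common to all summands),
and universal types `∀α.τ`. -/
inductive Ty : Type where
  | var : ℕ → Ty
  | unit : Ty
  | prod : Ty → Ty → Ty
  | arrow : Ty → Ty → Ty
  | mu : (m : ℕ) → (Fin m → Ty) → Ty
  | all : Ty → Ty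

/-- Lifting a renaming under a binder. -/
def liftR (f : ℕ → ℕ) : ℕ → ℕ
  | 0 => 0
  | i + 1 => f i + 1

def Ty.rename (f : ℕ → ℕ) : Ty → Ty
  | .var i => .var (f i)
  | .unit => .unit
  | .prod a b => .prod (a.rename f) (b.rename f)
  | .arrow a b => .arrow (a.rename f) (b.rename f)
  | .mu m ts => .mu m (fun j => (ts j).rename (liftR f))
  | .all a => .all (a.rename (liftR f))

/-- Lifting a type substitution under a type binder. -/
def liftS (σ : ℕ → Ty) : ℕ → Ty
  | 0 => .var 0
  | i + 1 => (σ i).rename Nat.succ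

def Ty.subst (σ : ℕ → Ty) : Ty → Ty
  | .var i => σ i
  | .unit => .unit
  | .prod a b => .prod (a.subst σ) (b.subst σ)
  | .arrow a b => .arrow (a.subst σ) (b.subst σ)
  | .mu m ts => .mu m (fun j => (ts j).subst (liftS σ))
  | .all a => .all (a.subst (liftS σ))

/-- Extending a type substitution (cons). -/
def consTy (τ : Ty) (σ : ℕ → Ty) : ℕ → Ty
  | 0 => τ
  | i + 1 => σ i

/-- `Ty.subst1 σ τ` is `τ[σ/α]`, substitution of `σ` for the innermost
type variable of `τ`. -/
def Ty.subst1 (σ : Ty) (τ : Ty) : Ty := τ.subst (consTy σ Ty.var)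

/-- `Ty.Wf Δ τ`: all free type variables of `τ` are among the first `Δ`. -/
def Ty.Wf : ℕ → Ty → Prop
  | Δ, .var i => i < Δ
  | _, .unit => True
  | Δ, .prod a b => a.Wf Δ ∧ b.Wf Δ
  | Δ, .arrow a b => a.Wf Δ ∧ b.Wf Δ
  | Δ, .mu _ ts => ∀ j, (ts j).Wf (Δ + 1)
  | Δ, .all a => a.Wf (Δ + 1)

/-- Terms.  `case v m es` is `case v of (in₁ x₁.e₁ | … | inₘ xₘ.eₘ)`;
`choice` is the countable choice `?`; `proj false`/`proj true` are the two
projections; `tapp v τ` is type application `v τ`; `tlam` is `Λα.e`. -/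
inductive Tm : Type where
  | var : ℕ → Tm
  | unit : Tm
  | pair : Tm → Tm → Tm
  | lam : Tm → Tm
  | inj : ℕ → Tm → Tm
  | tlam : Tm → Tm
  | choice : Tm
  | proj : Bool → Tm → Tm
  | app : Tm → Tm → Tm
  | case : Tm → (m : ℕ) → (Fin m → Tm) → Tm
  | tapp : Tm → Ty → Tm

/-- Values. -/
inductive IsVal : Tm → Prop where
  | var : ∀ {x}, IsVal (.var x)
  | unit : IsVal .unit
  | pair : ∀ {v₁ v₂}, IsVal v₁ → IsVal v₂ → IsVal (.pair v₁ v₂)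
  | lam : ∀ {e}, IsVal (.lam e)
  | inj : ∀ {j v}, IsVal v → IsVal (.inj j v)
  | tlam : ∀ {e}, IsVal (.tlam e)

/-- Renaming of term variables. -/
def Tm.rename (f : ℕ → ℕ) : Tm → Tm
  | .var i => .var (f i)
  | .unit => .unit
  | .pair a b => .pair (a.rename f) (b.rename f)
  | .lam e => .lam (e.rename (liftR f))
  | .inj j v => .inj j (v.rename f)
  | .tlam e => .tlam (e.rename f)
  | .choice => .choice
  | .proj b v => .proj b (v.rename f)
  | .app a b => .app (a.rename f) (b.rename f)
  | .case v m es => .case (v.rename f) m (fun j => (es j).rename (liftR f))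
  | .tapp v τ => .tapp (v.rename f) τ

/-- Renaming of type variables inside a term. -/
def Tm.tyRename (f : ℕ → ℕ) : Tm → Tm
  | .var i => .var i
  | .unit => .unit
  | .pair a b => .pair (a.tyRename f) (b.tyRename f)
  | .lam e => .lam (e.tyRename f)
  | .inj j v => .inj j (v.tyRename f)
  | .tlam e => .tlam (e.tyRename (liftR f))
  | .choice => .choice
  | .proj b v => .proj b (v.tyRename f)
  | .app a b => .app (a.tyRename f) (b.tyRename f)
  | .case v m es => .case (v.tyRename f) m (fun j => (es j).tyRename f)
  | .tapp v τ => .tapp (v.tyRename f) (τ.rename f)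

/-- Lifting a term substitution under a term binder. -/
def liftT (σ : ℕ → Tm) : ℕ → Tm
  | 0 => .var 0
  | i + 1 => (σ i).rename Nat.succ

/-- Substitution of terms for term variables. -/
def Tm.subst (σ : ℕ → Tm) : Tm → Tm
  | .var i => σ i
  | .unit => .unit
  | .pair a b => .pair (a.subst σ) (b.subst σ)
  | .lam e => .lam (e.subst (liftT σ))
  | .inj j v => .inj j (v.subst σ)
  | .tlam e => .tlam (e.subst (fun i => (σ i).tyRename Nat.succ))
  | .choice => .choice
  | .proj b v => .proj b (v.subst σ)
  | .app a b => .app (a.subst σ) (b.subst σ)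
  | .case v m es => .case (v.subst σ) m (fun j => (es j).subst (liftT σ))
  | .tapp v τ => .tapp (v.subst σ) τ

/-- Substitution of types for type variables inside a term. -/
def Tm.tySubst (σ : ℕ → Ty) : Tm → Tm
  | .var i => .var i
  | .unit => .unit
  | .pair a b => .pair (a.tySubst σ) (b.tySubst σ)
  | .lam e => .lam (e.tySubst σ)
  | .inj j v => .inj j (v.tySubst σ)
  | .tlam e => .tlam (e.tySubst (liftS σ))
  | .choice => .choice
  | .proj b v => .proj b (v.tySubst σ)
  | .app a b => .app (a.tySubst σ) (b.tySubst σ)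
  | .case v m es => .case (v.tySubst σ) m (fun j => (es j).tySubst σ)
  | .tapp v τ => .tapp (v.tySubst σ) (τ.subst σ)

/-- Extending a term substitution (cons). -/
def consTm (v : Tm) (σ : ℕ → Tm) : ℕ → Tm
  | 0 => v
  | i + 1 => σ i

/-- `subst1 v e` is `e[v/x]` for the innermost term variable. -/
def subst1 (v : Tm) (e : Tm) : Tm := e.subst (consTm v Tm.var)

/-- `tySubst1 σ e` is `e[σ/α]` for the innermost type variable. -/
def tySubst1 (σ : Ty) (e : Tm) : Tm := e.tySubst (consTy σ Ty.var)

/-- A term is closed if it is invariant under all term- and type-variable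
substitutions. -/
def Tm.Closed (e : Tm) : Prop :=
  (∀ σ : ℕ → Tm, e.subst σ = e) ∧ (∀ σ : ℕ → Ty, e.tySubst σ = e)

/-! ## Numerals and the type of natural numbers -/

/-- `nat = μα.(1+α)`. -/
def natTy : Ty := .mu 2 ![.unit, .var 0]

/-- Numerals `n̲`. -/
def numeral : ℕ → Tm
  | 0 => .inj 0 .unit
  | n + 1 => .inj 1 (numeral n)

/-! ## Operational semantics -/

/-- Labels classifying reduction steps.  `unfold` labels the unfold-fold
(case) reductions, `choice` labels the `? ↦ n̲` reductions. -/
inductive Lbl : Type where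
  | beta | projred | tbeta | unfold | choice

/-- Labeled one-step reduction. -/
inductive Step : Tm → Lbl → Tm → Prop where
  | projFst : ∀ {v₁ v₂}, IsVal v₁ → IsVal v₂ →
      Step (.proj false (.pair v₁ v₂)) .projred v₁
  | projSnd : ∀ {v₁ v₂}, IsVal v₁ → IsVal v₂ →
      Step (.proj true (.pair v₁ v₂)) .projred v₂
  | beta : ∀ {e v}, IsVal v → Step (.app (.lam e) v) .beta (subst1 v e)
  | tbeta : ∀ {e τ}, Step (.tapp (.tlam e) τ) .tbeta (tySubst1 τ e)
  | caseInj : ∀ {m : ℕ} {es : Fin m → Tm} {j : ℕ} {v} (h : j < m), IsVal v →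
      Step (.case (.inj j v) m es) .unfold (subst1 v (es ⟨j, h⟩))
  | choice : ∀ n : ℕ, Step .choice .choice (numeral n)
  | appArg : ∀ {v e l e'}, IsVal v → Step e l e' → Step (.app v e) l (.app v e')

/-- One-step reduction `e ↦ e'`. -/
def Red (e e' : Tm) : Prop := ∃ l, Step e l e'

/-- `StepsU e n e'`: `e ↦* e'` with exactly `n` unfold-fold reductions in
the sequence. -/
inductive StepsU : Tm → ℕ → Tm → Prop where
  | refl : ∀ {e}, StepsU e 0 e
  | unfold : ∀ {e e₁ n e₂}, Step e .unfold e₁ → StepsU e₁ n e₂ → StepsU e (n + 1) e₂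
  | other : ∀ {e l e₁ n e₂}, l ≠ .unfold → Step e l e₁ → StepsU e₁ n e₂ → StepsU e n e₂

/-- May-convergence `e↓`. -/
def MayConv (e : Tm) : Prop := ∃ n v, StepsU e n v ∧ IsVal v

/-- `e↓ₙ`: `e` reduces to a value with at most `n` unfold-fold reductions. -/
def MayConvN (e : Tm) (n : ℕ) : Prop := ∃ m ≤ n, ∃ v, StepsU e m v ∧ IsVal v

/-- `e ⇝¹ e'`: `e ↦* e'` with exactly one unfold-fold reduction. -/
def UnfoldOne (e e' : Tm) : Prop := StepsU e 1 e'

/-- `e ⇝ᵖ e'`: `e ↦* e'` with no choice reductions. -/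
inductive PSteps : Tm → Tm → Prop where
  | refl : ∀ {e}, PSteps e e
  | step : ∀ {e l e₁ e₂}, l ≠ .choice → Step e l e₁ → PSteps e₁ e₂ → PSteps e e₂

/-- `e ⇝ᵖ⁰ e'`: `e ↦* e'` with no choice reductions and no unfold-fold
reductions. -/
inductive P0Steps : Tm → Tm → Prop where
  | refl : ∀ {e}, P0Steps e e
  | step : ∀ {e l e₁ e₂}, l ≠ .choice → l ≠ .unfold → Step e l e₁ →
      P0Steps e₁ e₂ → P0Steps e e₂

/-- Must-convergence `e⇓`: the least predicate closed under the rule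
"if every one-step reduct of `e` must-converges then so does `e`". -/
inductive Must : Tm → Prop where
  | intro : ∀ {e}, (∀ e', Red e e' → Must e') → Must e

/-- The least uncountable ordinal `ω₁`. -/
noncomputable def omega1 : Ordinal.{0} := (Cardinal.aleph 1).ord

/-- The stratified predicate `e↯_β`, defined by ordinal induction:
`e↯_β` iff every one-step reduct `e'` of `e` satisfies `e'↯_ν`
for some `ν < β`. -/
def Lightning (β : Ordinal.{0}) (e : Tm) : Prop :=
  ∀ e', Red e e' → ∃ ν : {ν : Ordinal.{0} // ν < β}, Lightning ν.1 e'
termination_by β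
decreasing_by exact ν.2

/-- The stratified must-convergence predicate `e⇓_β`, defined by ordinal
induction: `e⇓_β` iff whenever `e ⇝¹ e'` there is `ν < β` with `e'⇓_ν`. -/
def MustStrat (β : Ordinal.{0}) (e : Tm) : Prop :=
  ∀ e', UnfoldOne e e' → ∃ ν : {ν : Ordinal.{0} // ν < β}, MustStrat ν.1 e'
termination_by β
decreasing_by exact ν.2

/-! ## Typing -/

/-- `Δ ⊢ Γ`: all types in the context are well-formed in `Δ`. -/
def CtxWf (Δ : ℕ) (Γ : List Ty) : Prop := ∀ τ ∈ Γ, Ty.Wf Δ τ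

/-- The typing judgement `Δ;Γ ⊢ e : τ` (`Δ` counts type variables, `Γ` is the
list of types of term variables, innermost first). -/
inductive HasTy : ℕ → List Ty → Tm → Ty → Prop where
  | var : ∀ {Δ Γ x τ}, CtxWf Δ Γ → Γ[x]? = some τ → HasTy Δ Γ (.var x) τ
  | unit : ∀ {Δ Γ}, CtxWf Δ Γ → HasTy Δ Γ .unit .unit
  | pair : ∀ {Δ Γ v₁ v₂ τ₁ τ₂}, IsVal v₁ → IsVal v₂ →
      HasTy Δ Γ v₁ τ₁ → HasTy Δ Γ v₂ τ₂ → HasTy Δ Γ (.pair v₁ v₂) (.prod τ₁ τ₂)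
  | lam : ∀ {Δ Γ e τ₁ τ₂}, Ty.Wf Δ τ₁ → HasTy Δ (τ₁ :: Γ) e τ₂ →
      HasTy Δ Γ (.lam e) (.arrow τ₁ τ₂)
  | inj : ∀ {Δ Γ v} {m : ℕ} {ts : Fin m → Ty} {j : ℕ} (h : j < m), IsVal v →
      Ty.Wf Δ (.mu m ts) →
      HasTy Δ Γ v (Ty.subst1 (.mu m ts) (ts ⟨j, h⟩)) →
      HasTy Δ Γ (.inj j v) (.mu m ts)
  | tlam : ∀ {Δ Γ e τ}, HasTy (Δ + 1) (Γ.map (Ty.rename Nat.succ)) e τ →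
      HasTy Δ Γ (.tlam e) (.all τ)
  | proj : ∀ {Δ Γ v τ₁ τ₂} (b : Bool), IsVal v → HasTy Δ Γ v (.prod τ₁ τ₂) →
      HasTy Δ Γ (.proj b v) (bif b then τ₂ else τ₁)
  | app : ∀ {Δ Γ v e τ₁ τ₂}, IsVal v → HasTy Δ Γ v (.arrow τ₁ τ₂) →
      HasTy Δ Γ e τ₁ → HasTy Δ Γ (.app v e) τ₂
  | case : ∀ {Δ Γ v τ'} {m : ℕ} {ts : Fin m → Ty} {es : Fin m → Tm}, IsVal v →
      HasTy Δ Γ v (.mu m ts) →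
      (∀ j : Fin m, HasTy Δ (Ty.subst1 (.mu m ts) (ts j) :: Γ) (es j) τ') →
      HasTy Δ Γ (.case v m es) τ'
  | tapp : ∀ {Δ Γ v τ σ}, IsVal v → HasTy Δ Γ v (.all τ) → Ty.Wf Δ σ →
      HasTy Δ Γ (.tapp v σ) (Ty.subst1 σ τ)
  | choice : ∀ {Δ Γ}, CtxWf Δ Γ → HasTy Δ Γ .choice natTy

/-! ## Evaluation contexts -/

/-- Evaluation contexts `E ::= [] | v E` are represented as lists of the
applied values, outermost first. -/
def plug (E : List Tm) (e : Tm) : Tm := E.foldr .app e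

/-- Typing of evaluation contexts, `⊢ E : τ ⊸ τ'`. -/
inductive ECtxTy : List Tm → Ty → Ty → Prop where
  | nil : ∀ {τ}, Ty.Wf 0 τ → ECtxTy [] τ τ
  | cons : ∀ {v E τ₁ τ τ₂}, IsVal v → HasTy 0 [] v (.arrow τ τ₂) →
      ECtxTy E τ₁ τ → ECtxTy (v :: E) τ₁ τ₂

/-! ## CIU preorders -/

/-- A closing type substitution `δ ∈ Type^Δ`. -/
def TySubstOK (Δ : ℕ) (δ : ℕ → Ty) : Prop := ∀ i < Δ, Ty.Wf 0 (δ i)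

/-- A type-respecting closing value substitution `γ ∈ Subst(Γ)`. -/
def SubstOK (Γ : List Ty) (γ : ℕ → Tm) : Prop :=
  ∀ i τ, Γ[i]? = some τ → IsVal (γ i) ∧ HasTy 0 [] (γ i) τ

/-- The may-CIU preorder `Δ;Γ ⊢ e ≾↓ciu e' : τ`. -/
def CiuMay (Δ : ℕ) (Γ : List Ty) (e e' : Tm) (τ : Ty) : Prop :=
  HasTy Δ Γ e τ ∧ HasTy Δ Γ e' τ ∧
  ∀ δ, TySubstOK Δ δ → ∀ γ, SubstOK (Γ.map (Ty.subst δ)) γ →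
  ∀ E τ', ECtxTy E (τ.subst δ) τ' →
  MayConv (plug E ((e.tySubst δ).subst γ)) → MayConv (plug E ((e'.tySubst δ).subst γ))

/-- The must-CIU preorder `Δ;Γ ⊢ e ≾⇓ciu e' : τ`. -/
def CiuMust (Δ : ℕ) (Γ : List Ty) (e e' : Tm) (τ : Ty) : Prop :=
  HasTy Δ Γ e τ ∧ HasTy Δ Γ e' τ ∧
  ∀ δ, TySubstOK Δ δ → ∀ γ, SubstOK (Γ.map (Ty.subst δ)) γ →
  ∀ E τ', ECtxTy E (τ.subst δ) τ' →
  Must (plug E ((e.tySubst δ).subst γ)) → Must (plug E ((e'.tySubst δ).subst γ))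

/-! ## Type-indexed relations, precongruences and contextual approximation -/

/-- A type-indexed relation. -/
def TIRel : Type := ℕ → List Ty → Tm → Tm → Ty → Prop

/-- A type-indexed relation relates only well-typed terms. -/
def WellTypedRel (R : TIRel) : Prop :=
  ∀ Δ Γ e e' τ, R Δ Γ e e' τ → HasTy Δ Γ e τ ∧ HasTy Δ Γ e' τ

def ReflRel (R : TIRel) : Prop := ∀ Δ Γ e τ, HasTy Δ Γ e τ → R Δ Γ e e τ

def TransRel (R : TIRel) : Prop :=
  ∀ Δ Γ e₁ e₂ e₃ τ, R Δ Γ e₁ e₂ τ → R Δ Γ e₂ e₃ τ → R Δ Γ e₁ e₃ τ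

/-- The compatibility rules (one for each term former). -/
structure Compatible (R : TIRel) : Prop where
  var : ∀ {Δ Γ x τ}, CtxWf Δ Γ → Γ[x]? = some τ → R Δ Γ (.var x) (.var x) τ
  unit : ∀ {Δ Γ}, CtxWf Δ Γ → R Δ Γ .unit .unit .unit
  pair : ∀ {Δ Γ v₁ v₂ v₁' v₂' τ₁ τ₂}, IsVal v₁ → IsVal v₂ → IsVal v₁' → IsVal v₂' →
      R Δ Γ v₁ v₁' τ₁ → R Δ Γ v₂ v₂' τ₂ →
      R Δ Γ (.pair v₁ v₂) (.pair v₁' v₂') (.prod τ₁ τ₂)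
  lam : ∀ {Δ Γ e e' τ₁ τ₂}, Ty.Wf Δ τ₁ → R Δ (τ₁ :: Γ) e e' τ₂ →
      R Δ Γ (.lam e) (.lam e') (.arrow τ₁ τ₂)
  inj : ∀ {Δ Γ v v'} {m : ℕ} {ts : Fin m → Ty} {j : ℕ} (h : j < m),
      IsVal v → IsVal v' → Ty.Wf Δ (.mu m ts) →
      R Δ Γ v v' (Ty.subst1 (.mu m ts) (ts ⟨j, h⟩)) →
      R Δ Γ (.inj j v) (.inj j v') (.mu m ts)
  tlam : ∀ {Δ Γ e e' τ}, R (Δ + 1) (Γ.map (Ty.rename Nat.succ)) e e' τ →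
      R Δ Γ (.tlam e) (.tlam e') (.all τ)
  proj : ∀ {Δ Γ v v' τ₁ τ₂} (b : Bool), IsVal v → IsVal v' →
      R Δ Γ v v' (.prod τ₁ τ₂) →
      R Δ Γ (.proj b v) (.proj b v') (bif b then τ₂ else τ₁)
  app : ∀ {Δ Γ v v' e e' τ₁ τ₂}, IsVal v → IsVal v' →
      R Δ Γ v v' (.arrow τ₁ τ₂) → R Δ Γ e e' τ₁ →
      R Δ Γ (.app v e) (.app v' e') τ₂
  case : ∀ {Δ Γ v v' τ'} {m : ℕ} {ts : Fin m → Ty} {es es' : Fin m → Tm},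
      IsVal v → IsVal v' → R Δ Γ v v' (.mu m ts) →
      (∀ j : Fin m, R Δ (Ty.subst1 (.mu m ts) (ts j) :: Γ) (es j) (es' j) τ') →
      R Δ Γ (.case v m es) (.case v' m es') τ'
  tapp : ∀ {Δ Γ v v' τ σ}, IsVal v → IsVal v' → R Δ Γ v v' (.all τ) →
      Ty.Wf Δ σ → R Δ Γ (.tapp v σ) (.tapp v' σ) (Ty.subst1 σ τ)
  choice : ∀ {Δ Γ}, CtxWf Δ Γ → R Δ Γ .choice .choice natTy

/-- May-adequacy. -/
def MayAdequate (R : TIRel) : Prop :=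
  ∀ e e' τ, R 0 [] e e' τ → MayConv e → MayConv e'

/-- Must-adequacy. -/
def MustAdequate (R : TIRel) : Prop :=
  ∀ e e' τ, R 0 [] e e' τ → Must e → Must e'

/-- May-contextual approximation `Δ;Γ ⊢ e ≾↓ctx e' : τ`: the largest
may-adequate precongruence. -/
def CtxMay (Δ : ℕ) (Γ : List Ty) (e e' : Tm) (τ : Ty) : Prop :=
  ∃ R : TIRel, WellTypedRel R ∧ ReflRel R ∧ TransRel R ∧ Compatible R ∧
    MayAdequate R ∧ R Δ Γ e e' τ

/-- Must-contextual approximation `Δ;Γ ⊢ e ≾⇓ctx e' : τ`: the largest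
must-adequate precongruence. -/
def CtxMust (Δ : ℕ) (Γ : List Ty) (e e' : Tm) (τ : Ty) : Prop :=
  ∃ R : TIRel, WellTypedRel R ∧ ReflRel R ∧ TransRel R ∧ Compatible R ∧
    MustAdequate R ∧ R Δ Γ e e' τ

/-- May-contextual equivalence `≅↓ctx`. -/
def CtxMayEq (Δ : ℕ) (Γ : List Ty) (e e' : Tm) (τ : Ty) : Prop :=
  CtxMay Δ Γ e e' τ ∧ CtxMay Δ Γ e' e τ

/-- Must-contextual equivalence `≅⇓ctx`. -/
def CtxMustEq (Δ : ℕ) (Γ : List Ty) (e e' : Tm) (τ : Ty) : Prop :=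
  CtxMust Δ Γ e e' τ ∧ CtxMust Δ Γ e' e τ

/-- Contextual equivalence `≅ctx` (intersection of may and must). -/
def CtxEq (Δ : ℕ) (Γ : List Ty) (e e' : Tm) (τ : Ty) : Prop :=
  CtxMayEq Δ Γ e e' τ ∧ CtxMustEq Δ Γ e e' τ

end CountChoice

namespace CountChoice

/-! ## Step-indexed uniform value relations and the may logical relation -/

/-- Step-indexed relations on terms (indexed over `ω`). -/
def SIRel : Type := ℕ → Tm → Tm → Prop

/-- Extending a relational environment (cons). -/
def consRel (r : SIRel) (ρ : ℕ → SIRel) : ℕ → SIRel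
  | 0 => r
  | i + 1 => ρ i

/-- `r ∈ VRel_ω(σ,σ')`: an `ω`-indexed uniform relation on `Val(σ) × Val(σ')`:
it relates only closed values of the given types, its 0-th component is all of
`Val(σ) × Val(σ')`, and it is decreasing in the index. -/
def IsVRel (σ σ' : Ty) (r : SIRel) : Prop :=
  (∀ n v v', r n v v' → (IsVal v ∧ HasTy 0 [] v σ) ∧ (IsVal v' ∧ HasTy 0 [] v' σ')) ∧
  (∀ v v', IsVal v → HasTy 0 [] v σ → IsVal v' → HasTy 0 [] v' σ' → r 0 v v') ∧
  (∀ n v v', r (n + 1) v v' → r n v v')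

/-- The lift `r⊤` of a step-indexed relation to evaluation contexts
(for may-convergence). -/
def sTopMay (r : SIRel) (n : ℕ) (E E' : List Tm) : Prop :=
  ∀ j ≤ n, ∀ v v', r j v v' → MayConvN (plug E v) j → MayConv (plug E' v')

/-- The biorthogonal lift `r⊤⊤` of a step-indexed relation to terms
(for may-convergence). -/
def ttopMay (r : SIRel) : SIRel := fun n e e' =>
  ∀ j ≤ n, ∀ E E', sTopMay r j E E' → MayConvN (plug E e) j → MayConv (plug E' e')

/-- The may logical relation `⟦τ⟧(r⃗)`, given closing type substitutions
`δ, δ'` and a relational environment `ρ` with `ρ i ∈ VRel_ω(δ i, δ' i)`;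
it is an `ω`-indexed uniform relation on `Val(τδ) × Val(τδ')`.
Recursive types are interpreted by the unique (guarded) fixed point
`fix s.⋃ⱼ inⱼ(▷⟦τⱼ⟧(r⃗,s))`, where `(▷R)ₙ = ⋂_{k<n} Rₖ`. -/
def interpMay : Ty → (ℕ → Ty) → (ℕ → Ty) → (ℕ → SIRel) → SIRel
  | .var i, _, _, ρ => ρ i
  | .unit, _, _, _ => fun _ v v' => v = .unit ∧ v' = .unit
  | .prod τ₁ τ₂, δ, δ', ρ => fun n v v' =>
      ∃ v₁ v₂ v₁' v₂', v = .pair v₁ v₂ ∧ v' = .pair v₁' v₂' ∧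
        interpMay τ₁ δ δ' ρ n v₁ v₁' ∧ interpMay τ₂ δ δ' ρ n v₂ v₂'
  | .arrow τ₁ τ₂, δ, δ', ρ => fun n v v' =>
      ∃ e e', v = .lam e ∧ v' = .lam e' ∧
        HasTy 0 [] v ((Ty.arrow τ₁ τ₂).subst δ) ∧
        HasTy 0 [] v' ((Ty.arrow τ₁ τ₂).subst δ') ∧
        ∀ m ≤ n, ∀ u u', interpMay τ₁ δ δ' ρ m u u' →
          ttopMay (interpMay τ₂ δ δ' ρ) m (subst1 u e) (subst1 u' e')
  | .all τ, δ, δ', ρ => fun n v v' =>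
      ∃ e e', v = .tlam e ∧ v' = .tlam e' ∧
        HasTy 0 [] v ((Ty.all τ).subst δ) ∧
        HasTy 0 [] v' ((Ty.all τ).subst δ') ∧
        ∀ σ σ', Ty.Wf 0 σ → Ty.Wf 0 σ' → ∀ r : SIRel, IsVRel σ σ' r →
          ttopMay (interpMay τ (consTy σ δ) (consTy σ' δ') (consRel r ρ)) n
            (tySubst1 σ e) (tySubst1 σ' e')
  | .mu m ts, δ, δ', ρ => fun n =>
      Nat.strongRecOn (motive := fun _ => Tm → Tm → Prop) n
        (fun n ih v v' =>
          ∃ j, ∃ h : j < m, ∃ u u',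
            v = .inj j u ∧ v' = .inj j u' ∧ IsVal u ∧ IsVal u' ∧
            HasTy 0 [] u (Ty.subst (consTy ((Ty.mu m ts).subst δ) δ) (ts ⟨j, h⟩)) ∧
            HasTy 0 [] u' (Ty.subst (consTy ((Ty.mu m ts).subst δ') δ') (ts ⟨j, h⟩)) ∧
            ∀ k, k < n →
              interpMay (ts ⟨j, h⟩)
                (consTy ((Ty.mu m ts).subst δ) δ)
                (consTy ((Ty.mu m ts).subst δ') δ')
                (consRel (fun i u₁ u₂ => ∃ hi : i < n, ih i hi u₁ u₂) ρ) k u u')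

/-- Pointwise relatedness of value substitutions, `(γ,γ') ∈ ⟦Γ⟧(r⃗)ₙ`. -/
def EnvRelMay (Γ : List Ty) (δ δ' : ℕ → Ty) (ρ : ℕ → SIRel) (n : ℕ)
    (γ γ' : ℕ → Tm) : Prop :=
  ∀ i τ, Γ[i]? = some τ → interpMay τ δ δ' ρ n (γ i) (γ' i)

/-- Logical may-approximation `Δ;Γ ⊢ e ≾↓log e' : τ`. -/
def LogMay (Δ : ℕ) (Γ : List Ty) (e e' : Tm) (τ : Ty) : Prop :=
  HasTy Δ Γ e τ ∧ HasTy Δ Γ e' τ ∧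
  ∀ δ δ', TySubstOK Δ δ → TySubstOK Δ δ' →
  ∀ ρ : ℕ → SIRel, (∀ i < Δ, IsVRel (δ i) (δ' i) (ρ i)) →
  ∀ n γ γ', EnvRelMay Γ δ δ' ρ n γ γ' →
  ttopMay (interpMay τ δ δ' ρ) n ((e.tySubst δ).subst γ) ((e'.tySubst δ').subst γ')

end CountChoice

namespace CountChoice

/-! ## Ordinal-indexed uniform value relations and the must logical relation -/

/-- Ordinal-indexed relations on terms. -/
def OSIRel : Type 1 := Ordinal.{0} → Tm → Tm → Prop

/-- Extending an ordinal-indexed relational environment (cons). -/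
def consORel (r : OSIRel) (ρ : ℕ → OSIRel) : ℕ → OSIRel
  | 0 => r
  | i + 1 => ρ i

/-- `r ∈ VRel_ω₁(σ,σ')`: an ordinal-indexed uniform relation on
`Val(σ) × Val(σ')`: it relates only closed values of the given types, its
0-th component is all of `Val(σ) × Val(σ')`, it is decreasing at successors
and it is the intersection of the earlier components at limits. -/
def IsOVRel (σ σ' : Ty) (r : OSIRel) : Prop :=
  (∀ β v v', r β v v' → (IsVal v ∧ HasTy 0 [] v σ) ∧ (IsVal v' ∧ HasTy 0 [] v' σ')) ∧
  (∀ v v', IsVal v → HasTy 0 [] v σ → IsVal v' → HasTy 0 [] v' σ' → r 0 v v') ∧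
  (∀ β v v', r (β + 1) v v' → r β v v') ∧
  (∀ β, Order.IsSuccLimit β → ∀ v v', (r β v v' ↔ ∀ ν < β, r ν v v'))

/-- The lift `r⊤` of an ordinal-indexed relation to evaluation contexts
(for must-convergence). -/
def sTopMust (r : OSIRel) (β : Ordinal.{0}) (E E' : List Tm) : Prop :=
  ∀ ν ≤ β, ∀ v v', r ν v v' → MustStrat ν (plug E v) → Must (plug E' v')

/-- The biorthogonal lift `r⊤⊤` of an ordinal-indexed relation to terms
(for must-convergence). -/
def ttopMust (r : OSIRel) : OSIRel := fun β e e' =>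
  ∀ ν ≤ β, ∀ E E', sTopMust r ν E E' → MustStrat ν (plug E e) → Must (plug E' e')

/-- The must logical relation `⟦τ⟧(r⃗)`, an ordinal-indexed uniform relation,
defined exactly as the may logical relation but with the must-biorthogonal
lifts. -/
def interpMust : Ty → (ℕ → Ty) → (ℕ → Ty) → (ℕ → OSIRel) → OSIRel
  | .var i, _, _, ρ => ρ i
  | .unit, _, _, _ => fun _ v v' => v = .unit ∧ v' = .unit
  | .prod τ₁ τ₂, δ, δ', ρ => fun β v v' =>
      ∃ v₁ v₂ v₁' v₂', v = .pair v₁ v₂ ∧ v' = .pair v₁' v₂' ∧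
        interpMust τ₁ δ δ' ρ β v₁ v₁' ∧ interpMust τ₂ δ δ' ρ β v₂ v₂'
  | .arrow τ₁ τ₂, δ, δ', ρ => fun β v v' =>
      ∃ e e', v = .lam e ∧ v' = .lam e' ∧
        HasTy 0 [] v ((Ty.arrow τ₁ τ₂).subst δ) ∧
        HasTy 0 [] v' ((Ty.arrow τ₁ τ₂).subst δ') ∧
        ∀ ν ≤ β, ∀ u u', interpMust τ₁ δ δ' ρ ν u u' →
          ttopMust (interpMust τ₂ δ δ' ρ) ν (subst1 u e) (subst1 u' e')
  | .all τ, δ, δ', ρ => fun β v v' =>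
      ∃ e e', v = .tlam e ∧ v' = .tlam e' ∧
        HasTy 0 [] v ((Ty.all τ).subst δ) ∧
        HasTy 0 [] v' ((Ty.all τ).subst δ') ∧
        ∀ σ σ', Ty.Wf 0 σ → Ty.Wf 0 σ' → ∀ r : OSIRel, IsOVRel σ σ' r →
          ttopMust (interpMust τ (consTy σ δ) (consTy σ' δ') (consORel r ρ)) β
            (tySubst1 σ e) (tySubst1 σ' e')
  | .mu m ts, δ, δ', ρ => fun β =>
      (wellFounded_lt (α := Ordinal.{0})).fix
        (C := fun _ => Tm → Tm → Prop)
        (fun β ih v v' =>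
          ∃ j, ∃ h : j < m, ∃ u u',
            v = .inj j u ∧ v' = .inj j u' ∧ IsVal u ∧ IsVal u' ∧
            HasTy 0 [] u (Ty.subst (consTy ((Ty.mu m ts).subst δ) δ) (ts ⟨j, h⟩)) ∧
            HasTy 0 [] u' (Ty.subst (consTy ((Ty.mu m ts).subst δ') δ') (ts ⟨j, h⟩)) ∧
            ∀ ν, ν < β →
              interpMust (ts ⟨j, h⟩)
                (consTy ((Ty.mu m ts).subst δ) δ)
                (consTy ((Ty.mu m ts).subst δ') δ')
                (consORel (fun i u₁ u₂ => ∃ hi : i < β, ih i hi u₁ u₂) ρ) ν u u')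
        β

/-- Pointwise relatedness of value substitutions, `(γ,γ') ∈ ⟦Γ⟧(r⃗)_β`. -/
def EnvRelMust (Γ : List Ty) (δ δ' : ℕ → Ty) (ρ : ℕ → OSIRel) (β : Ordinal.{0})
    (γ γ' : ℕ → Tm) : Prop :=
  ∀ i τ, Γ[i]? = some τ → interpMust τ δ δ' ρ β (γ i) (γ' i)

/-- Logical must-approximation `Δ;Γ ⊢ e ≾⇓log e' : τ`. -/
def LogMust (Δ : ℕ) (Γ : List Ty) (e e' : Tm) (τ : Ty) : Prop :=
  HasTy Δ Γ e τ ∧ HasTy Δ Γ e' τ ∧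
  ∀ δ δ', TySubstOK Δ δ → TySubstOK Δ δ' →
  ∀ ρ : ℕ → OSIRel, (∀ i < Δ, IsOVRel (δ i) (δ' i) (ρ i)) →
  ∀ β < omega1, ∀ γ γ', EnvRelMust Γ δ δ' ρ β γ γ' →
  ttopMust (interpMust τ δ δ' ρ) β ((e.tySubst δ).subst γ) ((e'.tySubst δ').subst γ')

end CountChoice

namespace CountChoice

/-! ## Derived terms -/

/-- `let x = e₁ in e₂`, i.e. `(λx.e₂) e₁`. -/
def letIn (e₁ e₂ : Tm) : Tm := .app (.lam e₂) e₁

/-- The term `δ_f = λy.case y of (in y'. f(λx.let r = y' y in r x))`,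
where `f` is the term variable of de Bruijn index 0 outside. -/
def deltaTm : Tm :=
  .lam (.case (.var 0) 1
    ![.app (.var 2)
        (.lam (letIn (.app (.var 1) (.var 2)) (.app (.var 0) (.var 1))))])

/-- The fixed point combinator
`fix = Λα,β.λf.δ_f(in δ_f) : ∀α,β.((α→β)→(α→β))→(α→β)`. -/
def fixTm : Tm := .tlam (.tlam (.lam (.app deltaTm (.inj 0 deltaTm))))

/-- `fix τ₁ τ₂ v`, i.e. `let x = fix τ₁ in let y = x τ₂ in y v`. -/
def fixApp (τ₁ τ₂ : Ty) (v : Tm) : Tm :=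
  letIn (.tapp fixTm τ₁)
    (letIn (.tapp (.var 0) τ₂) (.app (.var 0) (v.rename (· + 2))))

/-- The identity `id = λx.x`. -/
def idTm : Tm := .lam (.var 0)

/-- The divergent term `Ω = Λα.(fix 1 α)(λf.f)⟨⟩ : ∀α.α`. -/
def OmegaTm : Tm :=
  .tlam (letIn (fixApp .unit (.var 0) (.lam (.var 0))) (.app (.var 0) .unit))

/-- Erratic choice `e₁ or e₂`, i.e.
`let x = ? in case x of (in₁ y.e₁ | in₂ y.e₂)`. -/
def orTm (e₁ e₂ : Tm) : Tm :=
  letIn .choice (.case (.var 0) 2 ![e₁.rename (· + 2), e₂.rename (· + 2)])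

/-- Type application of a term: `w τ` abbreviates `let f = w in f τ`. -/
def letTapp (w : Tm) (τ : Ty) : Tm := letIn w (.tapp (.var 0) τ)

/-- `(λx.x t) w`: applies (the eventual value of) `w` to the closed term `t`. -/
def letAppArg (w t : Tm) : Tm := .app (.lam (.app (.var 0) t)) w

end CountChoice

namespace CountChoice

/-!
Every term has only countably many one-step reducts (the sole branching is `? ↦ n̲`, one reduct
per numeral). So if every reduct `e'` of `e` satisfies `e'⇓_{β(e')}` with `β(e') < ω₁`, the
supremum `β` of these countably many ordinals is still below `ω₁`, and `e⇓_{β+1}`: a sequence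
`e ⇝¹ e''` either starts with its unfold-fold step, and then `e''` is reached from a reduct
without further unfold-fold steps, or it starts with another step and continues as `e' ⇝¹ e''`.
Induction on `e⇓` concludes, and `β + 1 < ω₁` since `ω₁` is a limit.
-/

theorem succ_iSup_lt_omega1 {ι : Type} [Countable ι] {f : ι → Ordinal.{0}}
    (hf : ∀ i, f i < omega1) : Order.succ (⨆ i, f i) < omega1 := by
  rw [omega1, Cardinal.ord_aleph] at hf ⊢
  exact (Cardinal.isSuccLimit_omega 1).succ_lt (Ordinal.iSup_lt_omega_one hf)

theorem countable_setOf_red : ∀ e : Tm, {e' | Red e e'}.Countable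
  | .choice => (Set.countable_range numeral).mono <| by
      rintro _ ⟨_, hs⟩
      cases hs
      exact ⟨_, rfl⟩
  | .app a b => by
      refine (((countable_setOf_red b).image (Tm.app a)).union
        (t := {e' | ∃ e₀, a = .lam e₀ ∧ e' = subst1 b e₀}) ?_).mono ?_
      · refine Set.Subsingleton.countable ?_
        rintro _ ⟨e₀, rfl, rfl⟩ _ ⟨e₁, he, rfl⟩
        cases he
        rfl
      · rintro _ ⟨l, hs⟩
        cases hs with
        | beta => exact .inr ⟨_, rfl, rfl⟩
        | appArg _ hb => exact .inl ⟨_, ⟨l, hb⟩, rfl⟩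
  | .var _ | .unit | .pair _ _ | .lam _ | .inj _ _ | .tlam _ | .proj _ _ | .case _ _ _
  | .tapp _ _ => by
      refine Set.Subsingleton.countable ?_
      rintro _ ⟨l, hs⟩ _ ⟨l', hs'⟩
      cases hs <;> cases hs' <;> rfl

theorem StepsU.zero_trans {a b c : Tm} {n : ℕ} (hab : StepsU a 0 b) (hbc : StepsU b n c) :
    StepsU a n c := by
  generalize hz : 0 = z at hab
  induction hab with
  | refl => exact hbc
  | unfold => omega
  | other hl hs _ ih => exact .other hl hs (ih hbc hz)

theorem MustStrat.of_stepsU_zero {β : Ordinal.{0}} {e e' : Tm} (h : MustStrat β e)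
    (he : StepsU e 0 e') : MustStrat β e' := by
  rw [MustStrat] at h ⊢
  exact fun e'' he' => h e'' (he.zero_trans he')

theorem MustStrat.mono {β β' : Ordinal.{0}} {e : Tm} (hβ : β ≤ β') (h : MustStrat β e) :
    MustStrat β' e := by
  rw [MustStrat] at h ⊢
  intro e' he'
  obtain ⟨ν, hν⟩ := h e' he'
  exact ⟨⟨ν, ν.2.trans_le hβ⟩, hν⟩

theorem mustStrat_succ_of_forall_red {β : Ordinal.{0}} {e : Tm}
    (h : ∀ e', Red e e' → MustStrat β e') : MustStrat (Order.succ β) e := by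
  rw [MustStrat]
  intro e'' he''
  cases he'' with
  | unfold hs hrest => exact ⟨⟨β, Order.lt_succ β⟩, (h _ ⟨_, hs⟩).of_stepsU_zero hrest⟩
  | other _ hs hrest =>
    have h' := h _ ⟨_, hs⟩
    rw [MustStrat] at h'
    obtain ⟨ν, hν⟩ := h' e'' hrest
    exact ⟨⟨ν, ν.2.trans (Order.lt_succ β)⟩, hν⟩

theorem must_implies_mustStrat_general (e : Tm) (h : Must e) :
    ∃ β < omega1, MustStrat β e := by
  induction h with
  | @intro e _ ih =>
    choose β hβ hβe using ih
    have : Countable {e' // Red e e'} := (countable_setOf_red e).to_subtype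
    let f : {e' // Red e e'} → Ordinal.{0} := fun e' => β e'.1 e'.2
    refine ⟨Order.succ (⨆ e', f e'), succ_iSup_lt_omega1 fun e' => hβ e'.1 e'.2, ?_⟩
    exact mustStrat_succ_of_forall_red fun e' he' =>
      (hβe e' he').mono (Ordinal.le_iSup f ⟨e', he'⟩)

/-- **Lemma 5.2**: if a closed term `e` must-converges then `e⇓_β` for some
`β < ω₁`, the least uncountable ordinal. -/
theorem must_implies_mustStrat (e : Tm) (he : e.Closed) (h : Must e) :
    ∃ β < omega1, MustStrat β e :=
  must_implies_mustStrat_general e h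

end CountChoice
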